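/- Let α ∈ [1/2, 1] with d^α, d^{1−α} integers, let T ∈ ℝ^{d×d} be a positive semidefinite symmetric Toeplitz matrix, and let R_α be the sparse ruler. Then for every k ≤ d, ‖T_{R_α}‖₂² ≤ (32 k² / d^{2−2α}) · ‖T‖₂² + 8 · min( ‖T − T_k‖₂², (2/d^{1−α}) ‖T − T_k‖_F² ), where T_k is a best rank-k approximation of T (a rank-k matrix minimizing both ‖T − M‖_F and ‖T − M‖₂ over rank-k matrices M). -/

import Mathlib

open MeasureTheory ProbabilityTheory Matrix Real

noncomputable section

/-- The uniform quantizer with level `Δ`: `Q_Δ(x) = Δ(⌊x/Δ⌋ + 1/2)`. -/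
def quant (Δ x : ℝ) : ℝ := Δ * (⌊x / Δ⌋ + 1 / 2)

/-- The uniform distribution on `[-Δ/2, Δ/2]`. -/
def unifMeasure (Δ : ℝ) : Measure ℝ :=
  (ENNReal.ofReal Δ)⁻¹ • (volume.restrict (Set.Icc (-(Δ / 2)) (Δ / 2)))

/-- The triangular-dither distribution: the law of the sum of two independent
uniform random variables on `[-Δ/2, Δ/2]`. -/
def triMeasure (Δ : ℝ) : Measure ℝ :=
  Measure.map (fun p : ℝ × ℝ => p.1 + p.2) ((unifMeasure Δ).prod (unifMeasure Δ))

/-- The centered multivariate Gaussian measure `N(0, T)` on `ℝ^d`, realized as the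
pushforward of the standard Gaussian by the positive semidefinite square root of `T`. -/
def multiGaussian {d : ℕ} (T : Matrix (Fin d) (Fin d) ℝ) (hT : T.PosSemidef) :
    Measure (Fin d → ℝ) :=
  Measure.map (fun z => ((hT.1.eigenvectorUnitary : Matrix (Fin d) (Fin d) ℝ) *
      diagonal ((RCLike.ofReal : ℝ → ℝ) ∘ Real.sqrt ∘ hT.1.eigenvalues) *
      (star hT.1.eigenvectorUnitary : Matrix (Fin d) (Fin d) ℝ)).mulVec z) (Measure.pi fun _ : Fin d => gaussianReal 0 1)

/-- `R_s`: the ordered pairs `(j, k) ∈ R × R` with `j - k = s`. -/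
def pairsOf {d : ℕ} (R : Finset (Fin d)) (s : ℕ) : Finset (Fin d × Fin d) :=
  (R ×ˢ R).filter fun p => (p.1 : ℕ) = (p.2 : ℕ) + s

/-- A ruler: each distance `s ∈ {0, …, d-1}` is realized by some pair in `R`. -/
def IsRuler {d : ℕ} (R : Finset (Fin d)) : Prop :=
  ∀ s < d, (pairsOf R s).Nonempty

/-- The coverage coefficient `φ(R) = Σ_{s=1}^{d-1} 1/|R_s|`. -/
def coverage {d : ℕ} (R : Finset (Fin d)) : ℝ :=
  ∑ s ∈ Finset.Ico 1 d, (1 : ℝ) / (pairsOf R s).card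

/-- The symmetric Toeplitz matrix generated by `a`, with `Toep(a)_{j,k} = a_{|j-k|}`. -/
def toep {d : ℕ} (a : Fin d → ℝ) : Matrix (Fin d) (Fin d) ℝ :=
  fun j k => a ⟨Nat.dist j.1 k.1, by
    have hj := j.isLt; have hk := k.isLt; simp only [Nat.dist]; omega⟩

/-- The `ℓ²` operator (spectral) norm of a matrix. -/
def opNorm {m : Type*} [Fintype m] [DecidableEq m] (A : Matrix m m ℝ) : ℝ :=
  ‖Matrix.toEuclideanCLM (𝕜 := ℝ) A‖

/-- The Frobenius norm of a matrix. -/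
def frobNorm {m : Type*} [Fintype m] (A : Matrix m m ℝ) : ℝ :=
  Real.sqrt (∑ i, ∑ j, (A i j) ^ 2)

/-- The entrywise maximum norm of a matrix. -/
def maxNorm {m : Type*} [Fintype m] (A : Matrix m m ℝ) : ℝ :=
  ⨆ i, ⨆ j, |A i j|

/-- The principal submatrix of `A` with rows and columns indexed by `R`. -/
def subMatrix {d : ℕ} (A : Matrix (Fin d) (Fin d) ℝ) (R : Finset (Fin d)) :
    Matrix R R ℝ :=
  A.submatrix (fun i : R => (i : Fin d)) (fun j : R => (j : Fin d))

/-- The ruler-based quantized coefficient estimator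
`â_s = (1/(n|R_s|)) Σ_l Σ_{(j,k)∈R_s} ẋ_j^{(l)} ẋ_k^{(l)} − (Δ²/4)·1{s=0}`. -/
def hatCoef {d : ℕ} (Δ : ℝ) (R : Finset (Fin d)) (n : ℕ)
    (xdot : Fin n → Fin d → ℝ) (s : ℕ) : ℝ :=
  (1 / (n * (pairsOf R s).card)) *
      ∑ l, ∑ p ∈ pairsOf R s, xdot l p.1 * xdot l p.2
    - Δ ^ 2 / 4 * (if s = 0 then 1 else 0)

/-- The ruler-based quantized Toeplitz covariance estimator `T̂ = Toep(â)`. -/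
def hatT {d : ℕ} (Δ : ℝ) (R : Finset (Fin d)) (n : ℕ)
    (xdot : Fin n → Fin d → ℝ) : Matrix (Fin d) (Fin d) ℝ :=
  toep fun s => hatCoef Δ R n xdot s.1

/-- The quantized samples `ẋ^{(l)} = Q_Δ(x^{(l)} + τ^{(l)})`, as a function of the
random outcome `ω`. -/
def xdotOf {d n : ℕ} {Ω : Type*} (Δ : ℝ) (x τ : Fin n → Ω → Fin d → ℝ) (ω : Ω) :
    Fin n → Fin d → ℝ :=
  fun l i => quant Δ (x l ω i + τ l ω i)

/-- The setting of the ruler-based quantized Toeplitz covariance estimation problem: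
`T` is a positive semidefinite symmetric Toeplitz matrix, `x^{(1)}, …, x^{(n)}` are
i.i.d. samples from `N(0, T)`, the dithers `τ^{(1)}, …, τ^{(n)}` have i.i.d. triangular
entries at level `Δ`, and all samples and dithers are jointly independent. -/
structure QuantSetting {d n : ℕ} {Ω : Type*} [MeasurableSpace Ω] (μ : Measure Ω)
    (T : Matrix (Fin d) (Fin d) ℝ) (Δ : ℝ)
    (x τ : Fin n → Ω → Fin d → ℝ) : Prop where
  psd : T.PosSemidef
  toeplitz : ∃ a : Fin d → ℝ, T = toep a
  quantLevel : 0 < Δ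
  meas_x : ∀ l, Measurable (x l)
  meas_τ : ∀ l, Measurable (τ l)
  law_x : ∀ l, μ.map (x l) = multiGaussian T psd
  law_τ : ∀ l, μ.map (τ l) = Measure.pi fun _ : Fin d => triMeasure Δ
  indep : iIndepFun (Sum.elim x τ) μ

end
noncomputable section

/-- The ruler `R_α = {1,…,d^α} ∪ {d, d−d^{1−α}, …, d−(d^α−1)d^{1−α}}` (with the
positions `1,…,d` represented by `Fin d`), parametrized by `a = d^α`, `b = d^{1−α}`. -/
def rulerAlpha (d a b : ℕ) : Finset (Fin d) :=
  (Finset.univ.filter fun j : Fin d => (j : ℕ) < a) ∪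
    (Finset.univ.filter fun j : Fin d => ∃ t ∈ Finset.range a, (j : ℕ) + t * b + 1 = d)

/-- `L_e(x) = e_0 + 2 Σ_{s=1}^{d-1} e_s cos(2πsx)`. -/
def Lfun {d : ℕ} (e : Fin d → ℝ) (x : ℝ) : ℝ :=
  ∑ s : Fin d, (if (s : ℕ) = 0 then 1 else 2) * e s * Real.cos (2 * Real.pi * s * x)

/-- Entrywise thresholding of a matrix at level `ζ`. -/
def thresholdMat {d : ℕ} (ζ : ℝ) (A : Matrix (Fin d) (Fin d) ℝ) :
    Matrix (Fin d) (Fin d) ℝ :=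
  fun i j => if ζ ≤ |A i j| then A i j else 0

end

/-!
Write `a = d^α`, `b = d^{1-α}` (so `a b = d`) and count positions from `0`. A vector `x`
supported on `R_α` splits as `x₁ + x₂`, with `x₁` supported on the block `{0, …, a - 1}` and `x₂`
on the residue class of `d - 1` modulo `b`. Each of these two index sets has `b` pairwise disjoint
translates inside `{0, …, d - 1}`, on all of which the Toeplitz matrix `T` restricts to the same
matrix; transporting `y` to them gives `b` orthogonal vectors `u_c` of length `|y|` with
`b yᵀ T y = ∑_c u_cᵀ T u_c`. Splitting each `u_c` along the range of `T_k` and its orthogonal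
complement bounds this sum by `D |y|²`, `D = k ‖T‖ + min (b ‖T - T_k‖, √b ‖T - T_k‖_F)`: the range
part contributes at most `‖T‖` per basis vector, and on the complement `T` acts as `T - T_k`,
estimated termwise by its operator norm or all at once by Cauchy–Schwarz for the Frobenius inner
product. As `T` is positive semidefinite, `xᵀ T x ≤ 2 (x₁ᵀ T x₁ + x₂ᵀ T x₂) ≤ 2 D |x|² / b`, so
`‖T_{R_α}‖ ≤ 2 D / b`, and squaring gives the claim.
-/

open Matrix

lemma real_dotProduct_self_nonneg {n : Type*} [Fintype n] (x : n → ℝ) : 0 ≤ x ⬝ᵥ x :=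
  Finset.sum_nonneg fun i _ => mul_self_nonneg (x i)

lemma norm_toLp_eq_sqrt_dotProduct {n : Type*} [Fintype n] (x : n → ℝ) :
    ‖WithLp.toLp 2 x‖ = √(x ⬝ᵥ x) := by
  simp [EuclideanSpace.norm_eq, dotProduct, sq]

section OrthogonalFamily

variable {n ι : Type*} [Fintype n] [Fintype ι] [DecidableEq ι] {u : ι → n → ℝ} {s : ℝ}

lemma sum_smul_dotProduct_of_orthogonal
    (hu : ∀ c c', u c ⬝ᵥ u c' = if c = c' then s else 0) (w : ι → ℝ) (c : ι) :
    (∑ c', w c' • u c') ⬝ᵥ u c = w c * s := by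
  simp [sum_dotProduct, hu]

lemma dotProduct_self_sum_smul_of_orthogonal
    (hu : ∀ c c', u c ⬝ᵥ u c' = if c = c' then s else 0) (w : ι → ℝ) :
    (∑ c, w c • u c) ⬝ᵥ (∑ c, w c • u c) = s * ∑ c, w c ^ 2 := by
  simp only [dotProduct_sum, dotProduct_smul, sum_smul_dotProduct_of_orthogonal hu, Finset.mul_sum]
  exact Finset.sum_congr rfl fun c _ => by simp only [smul_eq_mul]; ring

lemma mul_sum_sq_dotProduct_le_of_orthogonal
    (hu : ∀ c c', u c ⬝ᵥ u c' = if c = c' then s else 0) (v : n → ℝ) :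
    s * ∑ c, (u c ⬝ᵥ v) ^ 2 ≤ s ^ 2 * (v ⬝ᵥ v) := by
  set z := ∑ c, (u c ⬝ᵥ v) • u c
  have hvz : v ⬝ᵥ z = ∑ c, (u c ⬝ᵥ v) ^ 2 := by
    simp only [z, dotProduct_sum, dotProduct_smul, smul_eq_mul, sq]
    exact Finset.sum_congr rfl fun c _ => by rw [dotProduct_comm v]
  have h := real_dotProduct_self_nonneg (s • v - z)
  simp only [sub_dotProduct, dotProduct_sub, smul_dotProduct, dotProduct_smul, smul_eq_mul,
    dotProduct_comm z v, hvz, z, dotProduct_self_sum_smul_of_orthogonal hu] at h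
  nlinarith [h]

lemma dotProduct_sub_sum_smul_eq_zero_of_orthonormal {p : ι → n → ℝ}
    (hp : ∀ i j, p i ⬝ᵥ p j = if i = j then 1 else 0) (v : n → ℝ) (w : ι → ℝ) :
    (v - ∑ i, (p i ⬝ᵥ v) • p i) ⬝ᵥ ∑ j, w j • p j = 0 := by
  simp [dotProduct_sum, sub_dotProduct, sum_smul_dotProduct_of_orthogonal hp, dotProduct_comm v]

lemma dotProduct_self_sub_sum_smul_le_of_orthonormal {p : ι → n → ℝ}
    (hp : ∀ i j, p i ⬝ᵥ p j = if i = j then 1 else 0) (v : n → ℝ) :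
    (v - ∑ i, (p i ⬝ᵥ v) • p i) ⬝ᵥ (v - ∑ i, (p i ⬝ᵥ v) • p i) ≤ v ⬝ᵥ v := by
  rw [dotProduct_sub _ v, dotProduct_sub_sum_smul_eq_zero_of_orthonormal hp, sub_zero,
    sub_dotProduct, sum_dotProduct]
  simp only [smul_dotProduct, smul_eq_mul, dotProduct_comm v]
  linarith [Finset.sum_nonneg fun i (_ : i ∈ Finset.univ) => mul_self_nonneg (p i ⬝ᵥ v)]

lemma sum_dotProduct_mulVec_le_sqrt_card_mul_frobNorm (E : Matrix n n ℝ) {r : ι → n → ℝ}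
    (hu : ∀ c c', u c ⬝ᵥ u c' = if c = c' then s else 0) (hs : 0 ≤ s)
    (hr : ∀ c, r c ⬝ᵥ r c ≤ s) :
    ∑ c, r c ⬝ᵥ E *ᵥ u c ≤ √(Fintype.card ι) * frobNorm E * s := by
  set G : n → n → ℝ := fun i => ∑ c, r c i • u c
  have hG : ∑ c, r c ⬝ᵥ E *ᵥ u c = ∑ q : n × n, E q.1 q.2 * G q.1 q.2 := by
    simp only [G, Fintype.sum_prod_type, dotProduct, mulVec, Finset.sum_apply, Pi.smul_apply,
      smul_eq_mul, Finset.mul_sum]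
    rw [Finset.sum_comm]
    refine Finset.sum_congr rfl fun i _ => ?_
    rw [Finset.sum_comm]
    exact Finset.sum_congr rfl fun j _ => Finset.sum_congr rfl fun c _ => by ring
  have hGG : ∑ q : n × n, G q.1 q.2 ^ 2 ≤ Fintype.card ι * s ^ 2 :=
    calc ∑ q : n × n, G q.1 q.2 ^ 2 = ∑ i, G i ⬝ᵥ G i := by
          simp [Fintype.sum_prod_type, dotProduct, sq]
      _ = s * ∑ c, r c ⬝ᵥ r c := by
          simp only [G, dotProduct_self_sum_smul_of_orthogonal hu, ← Finset.mul_sum]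
          rw [Finset.sum_comm]
          simp [dotProduct, sq]
      _ ≤ s * ∑ _c : ι, s := by gcongr with c; exact hr c
      _ = Fintype.card ι * s ^ 2 := by simp; ring
  calc ∑ c, r c ⬝ᵥ E *ᵥ u c
      ≤ √(∑ q : n × n, E q.1 q.2 ^ 2) * √(∑ q : n × n, G q.1 q.2 ^ 2) :=
        hG ▸ Real.sum_mul_le_sqrt_mul_sqrt _ _ _
    _ ≤ frobNorm E * √(Fintype.card ι * s ^ 2) := by
        rw [frobNorm, Fintype.sum_prod_type]
        gcongr
    _ = √(Fintype.card ι) * frobNorm E * s := by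
        rw [Real.sqrt_mul (Nat.cast_nonneg _), Real.sqrt_sq hs]; ring

end OrthogonalFamily

section OperatorNorm

variable {n : Type*} [Fintype n] [DecidableEq n]

lemma opNorm_nonneg (A : Matrix n n ℝ) : 0 ≤ opNorm A := norm_nonneg _

lemma dotProduct_mulVec_le_opNorm (A : Matrix n n ℝ) (x y : n → ℝ) :
    y ⬝ᵥ A *ᵥ x ≤ opNorm A * √(y ⬝ᵥ y) * √(x ⬝ᵥ x) := by
  calc y ⬝ᵥ A *ᵥ x
      = inner ℝ (WithLp.toLp 2 y) (toEuclideanCLM (𝕜 := ℝ) A (WithLp.toLp 2 x)) :=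
        (inner_toEuclideanCLM A _ _).symm
    _ ≤ ‖WithLp.toLp 2 y‖ * (opNorm A * ‖WithLp.toLp 2 x‖) := by
        grw [real_inner_le_norm, ContinuousLinearMap.le_opNorm]; rfl
    _ = opNorm A * √(y ⬝ᵥ y) * √(x ⬝ᵥ x) := by
        rw [norm_toLp_eq_sqrt_dotProduct, norm_toLp_eq_sqrt_dotProduct]; ring

lemma opNorm_le_of_dotProduct_mulVec_le {A : Matrix n n ℝ} (hA : A.PosSemidef) {c : ℝ}
    (hc : 0 ≤ c) (h : ∀ x, x ⬝ᵥ A *ᵥ x ≤ c * (x ⬝ᵥ x)) : opNorm A ≤ c := by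
  have hsymm : (toEuclideanCLM (𝕜 := ℝ) A).IsSymmetric := isSymmetric_toEuclideanLin_iff.mpr hA.1
  rw [opNorm, ContinuousLinearMap.norm_eq_iSup_rayleighQuotient _ hsymm]
  refine ciSup_le fun x => ?_
  have hform : (toEuclideanCLM (𝕜 := ℝ) A).reApplyInnerSelf x = x.ofLp ⬝ᵥ A *ᵥ x.ofLp := by
    rw [ContinuousLinearMap.reApplyInnerSelf_apply, real_inner_comm, inner_toEuclideanCLM]; rfl
  have hnorm : ‖x‖ ^ 2 = x.ofLp ⬝ᵥ x.ofLp := by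
    rw [← WithLp.toLp_ofLp 2 x, norm_toLp_eq_sqrt_dotProduct,
      Real.sq_sqrt (real_dotProduct_self_nonneg _)]
  have hnonneg : 0 ≤ x.ofLp ⬝ᵥ A *ᵥ x.ofLp := by simpa using hA.dotProduct_mulVec_nonneg x.ofLp
  rw [ContinuousLinearMap.rayleighQuotient, hform, hnorm,
    abs_of_nonneg (div_nonneg hnonneg (real_dotProduct_self_nonneg _))]
  exact div_le_of_le_mul₀ (real_dotProduct_self_nonneg _) hc (h _)

lemma sum_dotProduct_mulVec_le_card_mul_opNorm {ι : Type*} [Fintype ι] (E : Matrix n n ℝ)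
    {r u : ι → n → ℝ} {s : ℝ} (hr : ∀ c, r c ⬝ᵥ r c ≤ s) (hu : ∀ c, u c ⬝ᵥ u c ≤ s) :
    ∑ c, r c ⬝ᵥ E *ᵥ u c ≤ Fintype.card ι * opNorm E * s := by
  have hterm (c : ι) : r c ⬝ᵥ E *ᵥ u c ≤ opNorm E * s := by
    have hs : 0 ≤ s := (real_dotProduct_self_nonneg _).trans (hr c)
    calc r c ⬝ᵥ E *ᵥ u c ≤ opNorm E * √(r c ⬝ᵥ r c) * √(u c ⬝ᵥ u c) :=
          dotProduct_mulVec_le_opNorm _ _ _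
      _ ≤ opNorm E * √s * √s :=
          mul_le_mul (mul_le_mul_of_nonneg_left (Real.sqrt_le_sqrt (hr c)) (opNorm_nonneg E))
            (Real.sqrt_le_sqrt (hu c)) (Real.sqrt_nonneg _)
            (mul_nonneg (opNorm_nonneg E) (Real.sqrt_nonneg _))
      _ = opNorm E * s := by rw [mul_assoc, Real.mul_self_sqrt hs]
  calc ∑ c, r c ⬝ᵥ E *ᵥ u c ≤ ∑ _c : ι, opNorm E * s := Finset.sum_le_sum fun c _ => hterm c
    _ = Fintype.card ι * opNorm E * s := by simp [mul_assoc]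

lemma sum_dotProduct_mul_dotProduct_mulVec_le_opNorm_mul {ι : Type*} [Fintype ι]
    [DecidableEq ι] (T : Matrix n n ℝ) {u : ι → n → ℝ} {s : ℝ}
    (hu : ∀ c c', u c ⬝ᵥ u c' = if c = c' then s else 0) (hs : 0 ≤ s) {p : n → ℝ}
    (hp : p ⬝ᵥ p = 1) :
    ∑ c, (p ⬝ᵥ u c) * (p ⬝ᵥ T *ᵥ u c) ≤ opNorm T * s := by
  set z := ∑ c, (p ⬝ᵥ u c) • u c with hz_def
  have hz : z ⬝ᵥ z ≤ s ^ 2 := by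
    have h := mul_sum_sq_dotProduct_le_of_orthogonal hu p
    simp_rw [dotProduct_comm _ p] at h
    rwa [hz_def, dotProduct_self_sum_smul_of_orthogonal hu, ← mul_one (s ^ 2), ← hp]
  calc ∑ c, (p ⬝ᵥ u c) * (p ⬝ᵥ T *ᵥ u c) = p ⬝ᵥ T *ᵥ z := by
        simp [z, mulVec_sum, dotProduct_sum, mulVec_smul]
    _ ≤ opNorm T * √(p ⬝ᵥ p) * √(z ⬝ᵥ z) := dotProduct_mulVec_le_opNorm T z p
    _ ≤ opNorm T * s := by
        rw [hp, Real.sqrt_one, mul_one]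
        exact mul_le_mul_of_nonneg_left ((Real.sqrt_le_sqrt hz).trans_eq (Real.sqrt_sq hs))
          (opNorm_nonneg T)

end OperatorNorm

section LowRank

variable {n : Type*} [Fintype n] [DecidableEq n]

lemma exists_orthonormal_range_basis (A : Matrix n n ℝ) :
    ∃ p : Fin A.rank → n → ℝ, (∀ i j, p i ⬝ᵥ p j = if i = j then 1 else 0) ∧
      ∀ z, A *ᵥ z = ∑ i, (p i ⬝ᵥ A *ᵥ z) • p i := by
  set W := LinearMap.range (toEuclideanLin A)
  have hW : Module.finrank ℝ W = A.rank :=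
    (rank_eq_finrank_range_toLin A (EuclideanSpace.basisFun n ℝ).toBasis
      (EuclideanSpace.basisFun n ℝ).toBasis).symm
  set b := (stdOrthonormalBasis ℝ W).reindex (finCongr hW)
  refine ⟨fun i => (b i : EuclideanSpace ℝ n).ofLp, fun i j => ?_, fun z => ?_⟩
  · rw [← orthonormal_iff_ite.mp b.orthonormal i j, Submodule.coe_inner,
      EuclideanSpace.inner_eq_star_dotProduct, dotProduct_comm]
    rfl
  · set w : W := ⟨toEuclideanLin A (WithLp.toLp 2 z), LinearMap.mem_range_self _ _⟩
    have h := congrArg (fun v : W => (v : EuclideanSpace ℝ n).ofLp) (b.sum_repr' w)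
    simp only [Submodule.coe_sum, Submodule.coe_smul, WithLp.ofLp_sum, WithLp.ofLp_smul] at h
    refine h.symm.trans (Finset.sum_congr rfl fun i _ => ?_)
    rw [Submodule.coe_inner, EuclideanSpace.inner_eq_star_dotProduct, dotProduct_comm]
    rfl

noncomputable def rankSplitBound (T Tk : Matrix n n ℝ) (m : ℕ) : ℝ :=
  Tk.rank * opNorm T + min (m * opNorm (T - Tk)) (√m * frobNorm (T - Tk))

lemma rankSplitBound_nonneg (T Tk : Matrix n n ℝ) (m : ℕ) : 0 ≤ rankSplitBound T Tk m :=
  add_nonneg (mul_nonneg (Nat.cast_nonneg _) (opNorm_nonneg T))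
    (le_min (mul_nonneg (Nat.cast_nonneg _) (opNorm_nonneg _))
      (mul_nonneg (Real.sqrt_nonneg _) (Real.sqrt_nonneg _)))

theorem sum_dotProduct_mulVec_le_rankSplitBound {ι : Type*} [Fintype ι] [DecidableEq ι]
    (T Tk : Matrix n n ℝ) {u : ι → n → ℝ} {s : ℝ}
    (hu : ∀ c c', u c ⬝ᵥ u c' = if c = c' then s else 0) (hs : 0 ≤ s) :
    ∑ c, u c ⬝ᵥ T *ᵥ u c ≤ rankSplitBound T Tk (Fintype.card ι) * s := by
  obtain ⟨p, hp, hTk⟩ := exists_orthonormal_range_basis Tk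
  -- `r c` is orthogonal to the range of `Tk`, so against it `T` acts as `T - Tk`.
  set r : ι → n → ℝ := fun c => u c - ∑ i, (p i ⬝ᵥ u c) • p i
  have hsplit (c : ι) : u c ⬝ᵥ T *ᵥ u c =
      ∑ i, (p i ⬝ᵥ u c) * (p i ⬝ᵥ T *ᵥ u c) + r c ⬝ᵥ (T - Tk) *ᵥ u c := by
    rw [sub_mulVec, dotProduct_sub, hTk (u c), dotProduct_sub_sum_smul_eq_zero_of_orthonormal hp]
    simp [r, sub_dotProduct, sum_dotProduct]
  have hr (c : ι) : r c ⬝ᵥ r c ≤ s :=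
    (dotProduct_self_sub_sum_smul_le_of_orthonormal hp (u c)).trans_eq (by simp [hu])
  have huu (c : ι) : u c ⬝ᵥ u c ≤ s := by simp [hu]
  calc ∑ c, u c ⬝ᵥ T *ᵥ u c
      = ∑ i, ∑ c, (p i ⬝ᵥ u c) * (p i ⬝ᵥ T *ᵥ u c) + ∑ c, r c ⬝ᵥ (T - Tk) *ᵥ u c := by
        rw [Finset.sum_comm, ← Finset.sum_add_distrib]
        exact Finset.sum_congr rfl fun c _ => hsplit c
    _ ≤ ∑ _i : Fin Tk.rank, opNorm T * s + min (Fintype.card ι * opNorm (T - Tk))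
          (√(Fintype.card ι) * frobNorm (T - Tk)) * s := by
        gcongr with i
        · exact sum_dotProduct_mul_dotProduct_mulVec_le_opNorm_mul T hu hs (by simpa using hp i i)
        · rw [min_mul_of_nonneg _ _ hs]
          exact le_min (sum_dotProduct_mulVec_le_card_mul_opNorm _ hr huu)
            (sum_dotProduct_mulVec_le_sqrt_card_mul_frobNorm _ hu hs hr)
    _ = rankSplitBound T Tk (Fintype.card ι) * s := by simp [rankSplitBound]; ring

end LowRank

lemma extend_comp_eq_self {ι n : Type*} {e : ι → n} {x : n → ℝ}
    (hx : ∀ m ∉ Set.range e, x m = 0) : Function.extend e (x ∘ e) 0 = x := by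
  funext m
  by_cases hm : m ∈ Set.range e
  · obtain ⟨i, rfl⟩ := hm
    exact Function.FactorsThrough.extend_apply (fun _ _ h => congrArg x h) _ i
  · rw [Function.extend_apply' _ _ _ hm, hx m hm, Pi.zero_apply]

section ExtendByZero

variable {n ι : Type*} [Fintype n] [Fintype ι] {e e' : ι → n}

lemma extend_dotProduct (he : Function.Injective e) (y : ι → ℝ) (v : n → ℝ) :
    Function.extend e y 0 ⬝ᵥ v = ∑ i, y i * v (e i) :=
  (Fintype.sum_of_injective e he _ _
    (fun m hm => by simp [Function.extend_apply' _ _ _ hm]) fun i => by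
      simp [he.extend_apply]).symm

lemma extend_dotProduct_extend (he : Function.Injective e) (y : ι → ℝ) :
    Function.extend e y 0 ⬝ᵥ Function.extend e y 0 = y ⬝ᵥ y := by
  rw [extend_dotProduct he]
  simp [he.extend_apply, dotProduct]

lemma extend_dotProduct_extend_of_disjoint (he : Function.Injective e)
    (hee' : ∀ i j, e i ≠ e' j) (y y' : ι → ℝ) :
    Function.extend e y 0 ⬝ᵥ Function.extend e' y' 0 = 0 := by
  rw [extend_dotProduct he]
  refine Finset.sum_eq_zero fun i _ => ?_
  rw [Function.extend_apply' _ _ _ fun ⟨j, hj⟩ => hee' i j hj.symm, Pi.zero_apply, mul_zero]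

lemma extend_dotProduct_mulVec_extend (he : Function.Injective e) (T : Matrix n n ℝ)
    (y : ι → ℝ) :
    Function.extend e y 0 ⬝ᵥ T *ᵥ Function.extend e y 0 = y ⬝ᵥ T.submatrix e e *ᵥ y := by
  rw [extend_dotProduct he]
  refine Finset.sum_congr rfl fun i _ => ?_
  rw [mulVec, dotProduct_comm, extend_dotProduct he]
  simp [mulVec, dotProduct, mul_comm]

end ExtendByZero

lemma injective_of_injective_uncurry {κ ι n : Type*} {e : κ → ι → n}
    (he : Function.Injective (Function.uncurry e)) (c : κ) : Function.Injective (e c) :=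
  fun i j h => congrArg Prod.snd (@he (c, i) (c, j) h)

theorem card_mul_dotProduct_mulVec_le_of_submatrix_eq {n ι κ : Type*} [Fintype n]
    [DecidableEq n] [Fintype ι] [Fintype κ] [DecidableEq κ] (T Tk : Matrix n n ℝ)
    (e : κ → ι → n) (he : Function.Injective (Function.uncurry e)) {B : Matrix ι ι ℝ}
    (hB : ∀ c, T.submatrix (e c) (e c) = B) (y : ι → ℝ) :
    Fintype.card κ * (y ⬝ᵥ B *ᵥ y) ≤ rankSplitBound T Tk (Fintype.card κ) * (y ⬝ᵥ y) := by
  have horth (c c' : κ) : Function.extend (e c) y 0 ⬝ᵥ Function.extend (e c') y 0 =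
      if c = c' then y ⬝ᵥ y else 0 := by
    split_ifs with h
    · exact h ▸ extend_dotProduct_extend (injective_of_injective_uncurry he c) y
    · exact extend_dotProduct_extend_of_disjoint (injective_of_injective_uncurry he c)
        (fun i j hij => h (congrArg Prod.fst (@he (c, i) (c', j) hij))) y y
  calc Fintype.card κ * (y ⬝ᵥ B *ᵥ y)
      = ∑ c, Function.extend (e c) y 0 ⬝ᵥ T *ᵥ Function.extend (e c) y 0 := by
        simp [extend_dotProduct_mulVec_extend (injective_of_injective_uncurry he _), hB]
    _ ≤ _ := sum_dotProduct_mulVec_le_rankSplitBound T Tk horth (real_dotProduct_self_nonneg y)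

lemma toep_submatrix_eq_of_translate {d : ℕ} {ι κ : Type*} (v : Fin d → ℝ) (e : κ → ι → Fin d)
    (t : κ → ℕ) (g : ι → ℕ) (he : ∀ c i, (e c i : ℕ) = t c + g i) (c c' : κ) :
    (toep v).submatrix (e c) (e c) = (toep v).submatrix (e c') (e c') := by
  ext i j
  simp only [submatrix_apply, toep, he, Nat.dist_add_add_left]

theorem mul_dotProduct_toep_mulVec_le {d m : ℕ} {ι : Type*} [Fintype ι] (v : Fin d → ℝ)
    (Tk : Matrix (Fin d) (Fin d) ℝ) (e : Fin m → ι → Fin d)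
    (he : Function.Injective (Function.uncurry e)) (t : Fin m → ℕ) (g : ι → ℕ)
    (he_val : ∀ c i, (e c i : ℕ) = t c + g i) (c₀ : Fin m) {x : Fin d → ℝ}
    (hx : ∀ j ∉ Set.range (e c₀), x j = 0) :
    m * (x ⬝ᵥ toep v *ᵥ x) ≤ rankSplitBound (toep v) Tk m * (x ⬝ᵥ x) := by
  have he₀ := injective_of_injective_uncurry he c₀
  rw [← extend_comp_eq_self hx, extend_dotProduct_mulVec_extend he₀,
    extend_dotProduct_extend he₀]
  simpa using card_mul_dotProduct_mulVec_le_of_submatrix_eq (toep v) Tk e he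
    (fun c => toep_submatrix_eq_of_translate v e t g he_val c c₀) (x ∘ e c₀)

section Ruler

variable {d a b : ℕ}

theorem mul_dotProduct_toep_mulVec_le_of_lt (v : Fin d → ℝ) (Tk : Matrix (Fin d) (Fin d) ℝ)
    (hab : a * b = d) (hb : 0 < b) {x : Fin d → ℝ} (hx : ∀ j : Fin d, a ≤ j → x j = 0) :
    b * (x ⬝ᵥ toep v *ᵥ x) ≤ rankSplitBound (toep v) Tk b * (x ⬝ᵥ x) := by
  have hba : b * a = d := by rw [mul_comm, hab]
  -- the `b` consecutive blocks `{a c, …, a c + a - 1}`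
  refine mul_dotProduct_toep_mulVec_le v Tk
    (fun (c : Fin b) (i : Fin a) => Fin.cast hba (finProdFinEquiv (c, i)))
    ((Fin.cast_injective hba).comp finProdFinEquiv.injective) (fun c => a * c) (fun i => i)
    (fun c i => by simp [add_comm]) ⟨0, hb⟩ fun j hj => hx j ?_
  by_contra hja
  exact hj ⟨⟨j, by omega⟩, Fin.ext (by simp)⟩

theorem mul_dotProduct_toep_mulVec_le_of_mod (v : Fin d → ℝ) (Tk : Matrix (Fin d) (Fin d) ℝ)
    (hab : a * b = d) (hb : 0 < b) {x : Fin d → ℝ}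
    (hx : ∀ j : Fin d, (j : ℕ) % b ≠ b - 1 → x j = 0) :
    b * (x ⬝ᵥ toep v *ᵥ x) ≤ rankSplitBound (toep v) Tk b * (x ⬝ᵥ x) := by
  -- the `b` residue classes `{c, c + b, …, c + (a - 1) b}`
  refine mul_dotProduct_toep_mulVec_le v Tk
    (fun (c : Fin b) (t : Fin a) => Fin.cast hab (finProdFinEquiv (t, c)))
    ((Fin.cast_injective hab).comp (finProdFinEquiv.injective.comp Prod.swap_injective))
    (fun c => c) (fun t => b * t) (fun c t => by simp) ⟨b - 1, by omega⟩ fun j hj => hx j ?_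
  intro hjb
  have hja : (j : ℕ) / b < a := Nat.div_lt_of_lt_mul (by rw [mul_comm, hab]; exact j.isLt)
  exact hj ⟨⟨j / b, hja⟩, Fin.ext (by simp [← hjb, Nat.mod_add_div])⟩

lemma mod_eq_of_mem_rulerAlpha (hab : a * b = d) (hb : 0 < b) {j : Fin d}
    (hj : j ∈ rulerAlpha d a b) (hja : a ≤ j) : (j : ℕ) % b = b - 1 := by
  simp only [rulerAlpha, Finset.mem_union, Finset.mem_filter, Finset.mem_univ, true_and,
    Finset.mem_range] at hj
  obtain hj | ⟨t, ht, hjt⟩ := hj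
  · omega
  obtain ⟨r, rfl⟩ : ∃ r, a = t + 1 + r := ⟨a - 1 - t, by omega⟩
  have hj' : (j : ℕ) = (b - 1) + b * r := by
    have h : (j : ℕ) + 1 = b + b * r := by linarith [hjt.trans hab.symm]
    omega
  rw [hj', Nat.add_mul_mod_self_left, Nat.mod_eq_of_lt (by omega)]

end Ruler

lemma Matrix.PosSemidef.dotProduct_mulVec_add_le {n : Type*} [Fintype n] {T : Matrix n n ℝ}
    (hT : T.PosSemidef) (x y : n → ℝ) :
    (x + y) ⬝ᵥ T *ᵥ (x + y) ≤ 2 * (x ⬝ᵥ T *ᵥ x) + 2 * (y ⬝ᵥ T *ᵥ y) := by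
  have hsymm : y ⬝ᵥ T *ᵥ x = x ⬝ᵥ T *ᵥ y := by
    rw [dotProduct_mulVec, ← mulVec_transpose, dotProduct_comm,
      ← conjTranspose_eq_transpose_of_trivial, hT.1.eq]
  have h := hT.dotProduct_mulVec_nonneg (x - y)
  simp only [star_trivial, mulVec_add, mulVec_sub, dotProduct_add, add_dotProduct,
    dotProduct_sub, sub_dotProduct] at h ⊢
  linarith

lemma opNorm_subMatrix_le_of_dotProduct_mulVec_le {d : ℕ} {T : Matrix (Fin d) (Fin d) ℝ}
    (hT : T.PosSemidef) (R : Finset (Fin d)) {c : ℝ} (hc : 0 ≤ c)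
    (h : ∀ x : Fin d → ℝ, (∀ j ∉ R, x j = 0) → x ⬝ᵥ T *ᵥ x ≤ c * (x ⬝ᵥ x)) :
    opNorm (subMatrix T R) ≤ c := by
  refine opNorm_le_of_dotProduct_mulVec_le (hT.submatrix _) hc fun ξ => ?_
  have hval : Function.Injective (Subtype.val : R → Fin d) := Subtype.val_injective
  have hξ := h (Function.extend Subtype.val ξ 0) fun j hj =>
    Function.extend_apply' _ _ _ (by simpa using hj)
  rwa [extend_dotProduct_mulVec_extend hval, extend_dotProduct_extend hval] at hξ

theorem opNorm_subMatrix_toep_rulerAlpha_le {d a b : ℕ} (v : Fin d → ℝ)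
    (Tk : Matrix (Fin d) (Fin d) ℝ) (hpsd : (toep v).PosSemidef) (hab : a * b = d)
    (hb : 0 < b) :
    opNorm (subMatrix (toep v) (rulerAlpha d a b)) ≤ 2 * rankSplitBound (toep v) Tk b / b := by
  refine opNorm_subMatrix_le_of_dotProduct_mulVec_le hpsd _
    (by have := rankSplitBound_nonneg (toep v) Tk b; positivity) fun x hx => ?_
  set x₁ : Fin d → ℝ := fun j => if (j : ℕ) < a then x j else 0
  set x₂ : Fin d → ℝ := fun j => if (j : ℕ) < a then 0 else x j
  have hx₁₂ : x = x₁ + x₂ := by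
    funext j; by_cases hj : (j : ℕ) < a <;> simp [x₁, x₂, hj]
  have hnorm : x ⬝ᵥ x = x₁ ⬝ᵥ x₁ + x₂ ⬝ᵥ x₂ := by
    simp only [dotProduct, ← Finset.sum_add_distrib]
    refine Finset.sum_congr rfl fun j _ => ?_
    by_cases hj : (j : ℕ) < a <;> simp [x₁, x₂, hj]
  have h₁ := mul_dotProduct_toep_mulVec_le_of_lt v Tk hab hb (x := x₁) fun j hj => by
    simp [x₁, not_lt.mpr hj]
  have h₂ := mul_dotProduct_toep_mulVec_le_of_mod v Tk hab hb (x := x₂) fun j hj => by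
    by_cases hja : (j : ℕ) < a
    · simp [x₂, hja]
    · by_cases hjR : j ∈ rulerAlpha d a b
      · exact absurd (mod_eq_of_mem_rulerAlpha hab hb hjR (not_lt.mp hja)) hj
      · simp [x₂, hja, hx j hjR]
  have hb' : (0 : ℝ) < b := Nat.cast_pos.mpr hb
  rw [div_mul_eq_mul_div, le_div_iff₀' hb']
  calc b * (x ⬝ᵥ toep v *ᵥ x) = b * ((x₁ + x₂) ⬝ᵥ toep v *ᵥ (x₁ + x₂)) := by rw [← hx₁₂]
    _ ≤ b * (2 * (x₁ ⬝ᵥ toep v *ᵥ x₁) + 2 * (x₂ ⬝ᵥ toep v *ᵥ x₂)) :=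
        mul_le_mul_of_nonneg_left (hpsd.dotProduct_mulVec_add_le x₁ x₂) hb'.le
    _ = 2 * (b * (x₁ ⬝ᵥ toep v *ᵥ x₁)) + 2 * (b * (x₂ ⬝ᵥ toep v *ᵥ x₂)) := by ring
    _ ≤ 2 * (rankSplitBound (toep v) Tk b * (x₁ ⬝ᵥ x₁)) +
          2 * (rankSplitBound (toep v) Tk b * (x₂ ⬝ᵥ x₂)) := by gcongr
    _ = 2 * rankSplitBound (toep v) Tk b * (x ⬝ᵥ x) := by rw [hnorm]; ring

lemma sq_two_mul_add_min_div_le {b k σ β f : ℝ} (hb : 0 < b) (hβ : 0 ≤ β) (hf : 0 ≤ f) :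
    (2 * (k * σ + min (b * β) (√b * f)) / b) ^ 2 ≤
      32 * k ^ 2 / b ^ 2 * σ ^ 2 + 8 * min (β ^ 2) (2 / b * f ^ 2) := by
  set μ := min (b * β) (√b * f)
  have hμ : 0 ≤ μ := le_min (by positivity) (by positivity)
  have hμβ : μ ^ 2 / b ^ 2 ≤ β ^ 2 := by
    rw [div_le_iff₀ (by positivity), ← mul_pow, mul_comm β]
    exact pow_le_pow_left₀ hμ (min_le_left _ _) 2
  have hμf : μ ^ 2 / b ^ 2 ≤ 2 / b * f ^ 2 := by
    have h : μ ^ 2 ≤ b * f ^ 2 := by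
      calc μ ^ 2 ≤ (√b * f) ^ 2 := pow_le_pow_left₀ hμ (min_le_right _ _) 2
        _ = b * f ^ 2 := by rw [mul_pow, Real.sq_sqrt hb.le]
    rw [div_le_iff₀ (by positivity)]
    calc μ ^ 2 ≤ b * f ^ 2 := h
      _ ≤ 2 / b * f ^ 2 * b ^ 2 := by
          rw [show 2 / b * f ^ 2 * b ^ 2 = 2 * (b * f ^ 2) by field_simp]
          nlinarith [sq_nonneg f]
  calc (2 * (k * σ + μ) / b) ^ 2 = 4 * (k * σ + μ) ^ 2 / b ^ 2 := by ring
    _ ≤ (8 * (k * σ) ^ 2 + 8 * μ ^ 2) / b ^ 2 := by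
        gcongr; nlinarith [sq_nonneg (k * σ - μ)]
    _ = 8 * k ^ 2 / b ^ 2 * σ ^ 2 + 8 * (μ ^ 2 / b ^ 2) := by ring
    _ ≤ 32 * k ^ 2 / b ^ 2 * σ ^ 2 + 8 * min (β ^ 2) (2 / b * f ^ 2) := by
        gcongr
        · norm_num
        · exact le_min hμβ hμf

theorem opNorm_submatrix_rulerAlpha_bound_general
    (d a b k : ℕ) (α : ℝ) (hd : 0 < d)
    (ha : (a : ℝ) = (d : ℝ) ^ α) (hb : (b : ℝ) = (d : ℝ) ^ (1 - α))
    (T : Matrix (Fin d) (Fin d) ℝ) (hpsd : T.PosSemidef)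
    (htoep : ∃ v : Fin d → ℝ, T = toep v)
    (Tk : Matrix (Fin d) (Fin d) ℝ) (hrank : Tk.rank = k) :
    opNorm (subMatrix T (rulerAlpha d a b)) ^ 2 ≤
      32 * k ^ 2 / (d : ℝ) ^ (2 - 2 * α) * opNorm T ^ 2 +
        8 * min (opNorm (T - Tk) ^ 2)
          (2 / (d : ℝ) ^ (1 - α) * frobNorm (T - Tk) ^ 2) := by
  obtain ⟨v, rfl⟩ := htoep
  have hd' : (0 : ℝ) < d := Nat.cast_pos.mpr hd
  have hab : a * b = d := by
    exact_mod_cast (show (a * b : ℝ) = d by rw [ha, hb, ← Real.rpow_add hd']; simp)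
  have hb' : (0 : ℝ) < b := hb ▸ Real.rpow_pos_of_pos hd' (1 - α)
  have hbsq : (d : ℝ) ^ (2 - 2 * α) = (b : ℝ) ^ 2 := by
    rw [hb, ← Real.rpow_natCast, ← Real.rpow_mul hd'.le]; ring_nf
  rw [hbsq, ← hb, ← hrank]
  calc opNorm (subMatrix (toep v) (rulerAlpha d a b)) ^ 2
      ≤ (2 * rankSplitBound (toep v) Tk b / b) ^ 2 :=
        pow_le_pow_left₀ (opNorm_nonneg _)
          (opNorm_subMatrix_toep_rulerAlpha_le v Tk hpsd hab (Nat.cast_pos.mp hb')) 2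
    _ ≤ _ := sq_two_mul_add_min_div_le hb' (opNorm_nonneg _) (Real.sqrt_nonneg _)

/-- bound on the operator norm of the principal submatrix `T_{R_α}` of a
positive semidefinite symmetric Toeplitz matrix via a best rank-`k` approximation. -/
theorem opNorm_submatrix_rulerAlpha_bound
    (d a b k : ℕ) (α : ℝ) (hd : 0 < d) (hα : α ∈ Set.Icc (1 / 2 : ℝ) 1)
    (ha : (a : ℝ) = (d : ℝ) ^ α) (hb : (b : ℝ) = (d : ℝ) ^ (1 - α))
    (T : Matrix (Fin d) (Fin d) ℝ) (hpsd : T.PosSemidef)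
    (htoep : ∃ v : Fin d → ℝ, T = toep v)
    (hk : k ≤ d)
    (Tk : Matrix (Fin d) (Fin d) ℝ) (hrank : Tk.rank = k)
    (hbestF : ∀ M : Matrix (Fin d) (Fin d) ℝ, M.rank = k →
      frobNorm (T - Tk) ≤ frobNorm (T - M))
    (hbestOp : ∀ M : Matrix (Fin d) (Fin d) ℝ, M.rank = k →
      opNorm (T - Tk) ≤ opNorm (T - M)) :
    opNorm (subMatrix T (rulerAlpha d a b)) ^ 2 ≤
      32 * k ^ 2 / (d : ℝ) ^ (2 - 2 * α) * opNorm T ^ 2 +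
        8 * min (opNorm (T - Tk) ^ 2)
          (2 / (d : ℝ) ^ (1 - α) * frobNorm (T - Tk) ^ 2) :=
  opNorm_submatrix_rulerAlpha_bound_general d a b k α hd ha hb T hpsd htoep Tk hrank
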